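/- As Q → ∞, the number of Farey fractions of order Q with odd denominator equals (2/π²)·Q² + O(Q log Q), and the number of Farey fractions of order Q with even denominator equals (1/π²)·Q² + O(Q log Q). -/

import Mathlib

open Filter MeasureTheory Real Asymptotics Topology

noncomputable section

/-- The Farey fractions of order `Q`: all rationals in `[0,1]` with denominator `≤ Q`. -/
def fareyFinset (Q : ℕ) : Finset ℚ :=
  ((Finset.range (Q + 1) ×ˢ Finset.Icc 1 Q).image fun p => (p.1 : ℚ) / (p.2 : ℚ)).filter
    fun x => x ≤ 1

/-!
Counting by denominator, the Farey fractions of order `Q` with odd denominator number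
`1 + ∑_{n ≤ Q odd} φ(n)` and those with even denominator `∑_{n ≤ Q even} φ(n)`. Twisting the
Möbius inversion `φ = μ ∗ id` by a completely multiplicative weight `χ` (here `1` or the indicator
of the odd numbers) gives `∑_{n ≤ Q} χ(n) φ(n) = ∑_{e ≤ Q} μ(e) χ(e) ∑_{m ≤ Q/e} χ(m) m`. The
inner sum is `β (Q/e)² + O(Q/e)` with `β = 1/2`, resp. `1/4`, so the whole sum is
`β (∑_e μ(e) χ(e)/e²) Q² + O(Q log Q)`, where `∑ μ(e)/e² = 1/ζ(2) = 6/π²` and the sum over odd `e`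
is `8/π²`.
-/

open Finset
open scoped ArithmeticFunction.Moebius

lemma Rat.den_natCast_div_of_coprime {a d : ℕ} (hd : 0 < d) (h : a.Coprime d) :
    ((a : ℚ) / d).den = d := by
  have := Rat.den_div_eq_of_coprime (a := a) (b := d) (by exact_mod_cast hd) (by simpa using h)
  rw [Int.cast_natCast, Int.cast_natCast] at this
  omega

lemma Rat.num_le_den_of_le_one {x : ℚ} (h : x ≤ 1) : x.num ≤ x.den := by
  have := mul_le_mul_of_nonneg_right h (Nat.cast_nonneg (α := ℚ) x.den)
  rw [Rat.mul_den_eq_num, one_mul] at this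
  exact_mod_cast this

lemma mem_fareyFinset {Q : ℕ} {x : ℚ} : x ∈ fareyFinset Q ↔ 0 ≤ x ∧ x ≤ 1 ∧ x.den ≤ Q := by
  simp only [fareyFinset, mem_filter, mem_image, mem_product, mem_range, mem_Icc, Prod.exists]
  constructor
  · rintro ⟨⟨a, q, ⟨-, hq, hqQ⟩, rfl⟩, hx1⟩
    refine ⟨by positivity, hx1, le_trans (Nat.le_of_dvd hq ?_) hqQ⟩
    have := Rat.den_dvd a q
    rw [Rat.divInt_eq_div, Int.cast_natCast, Int.cast_natCast] at this
    exact Int.natCast_dvd_natCast.mp this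
  · rintro ⟨hx0, hx1, hxQ⟩
    have hnum : (x.num.toNat : ℤ) = x.num := Int.toNat_of_nonneg (Rat.num_nonneg.mpr hx0)
    refine ⟨⟨x.num.toNat, x.den, ⟨?_, x.pos, hxQ⟩, ?_⟩, hx1⟩
    · have := Rat.num_le_den_of_le_one hx1
      omega
    · rw [← Int.cast_natCast, hnum, Rat.num_div_den]

lemma card_filter_den_fareyFinset {Q d : ℕ} (hd : 0 < d) (hdQ : d ≤ Q) :
    #{x ∈ fareyFinset Q | x.den = d} = #{a ∈ range (d + 1) | d.Coprime a} := by
  symm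
  refine card_nbij (fun a => (a : ℚ) / d) ?_ ?_ ?_
  · intro a ha
    simp only [coe_filter, mem_range, Set.mem_ofPred_eq] at ha
    have hden := Rat.den_natCast_div_of_coprime hd ha.2.symm
    simp only [coe_filter, Set.mem_ofPred_eq, mem_fareyFinset, hden, and_true]
    exact ⟨by positivity, div_le_one_of_le₀ (by exact_mod_cast Nat.lt_succ_iff.mp ha.1)
      (by positivity), hdQ⟩
  · intro a _ b _ hab
    have hd' : (d : ℚ) ≠ 0 := by positivity
    exact_mod_cast (div_left_inj' hd').mp hab
  · intro x hx
    simp only [coe_filter, Set.mem_ofPred_eq, mem_fareyFinset] at hx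
    obtain ⟨⟨hx0, hx1, -⟩, rfl⟩ := hx
    have hnum : (x.num.toNat : ℤ) = x.num := Int.toNat_of_nonneg (Rat.num_nonneg.mpr hx0)
    refine ⟨x.num.toNat, ?_, ?_⟩
    · simp only [coe_filter, mem_range, Set.mem_ofPred_eq]
      have := Rat.num_le_den_of_le_one hx1
      refine ⟨by omega, ?_⟩
      rw [Nat.coprime_comm, ← Int.natAbs_natCast x.num.toNat, hnum]
      exact x.reduced
    · dsimp only
      rw [← Int.cast_natCast, hnum, Rat.num_div_den]

lemma card_filter_coprime_range_succ (d : ℕ) :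
    #{a ∈ range (d + 1) | d.Coprime a} = d.totient + if d = 1 then 1 else 0 := by
  rw [range_add_one, filter_insert, Nat.totient]
  by_cases hd : d = 1
  · subst hd; simp
  · rw [if_neg (by simpa using hd), if_neg hd, add_zero]

lemma card_filter_fareyFinset (p : ℕ → Prop) [DecidablePred p] {Q : ℕ} (hQ : 0 < Q) :
    #{x ∈ fareyFinset Q | p x.den} =
      (if p 1 then 1 else 0) + ∑ d ∈ Ioc 0 Q with p d, d.totient := by
  rw [card_eq_sum_card_fiberwise (f := Rat.den) (t := {d ∈ Ioc 0 Q | p d})]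
  · have hfibre : ∀ d ∈ {d ∈ Ioc 0 Q | p d},
        #{x ∈ {x ∈ fareyFinset Q | p x.den} | x.den = d} = d.totient + if d = 1 then 1 else 0 := by
      intro d hd
      simp only [mem_filter, mem_Ioc] at hd
      rw [filter_filter, ← card_filter_coprime_range_succ,
        ← card_filter_den_fareyFinset hd.1.1 hd.1.2]
      congr 1
      exact filter_congr fun x _ => ⟨And.right, fun h => ⟨h ▸ hd.2, h⟩⟩
    rw [sum_congr rfl hfibre, sum_add_distrib, sum_ite_eq', add_comm]
    simp [hQ.ne', Nat.one_le_iff_ne_zero]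
  · intro x hx
    simp only [coe_filter, mem_fareyFinset, Set.mem_ofPred_eq, mem_Ioc] at hx ⊢
    exact ⟨⟨x.pos, hx.1.2.2⟩, hx.2⟩

lemma totient_eq_sum_moebius_mul {R : Type*} [Ring R] {n : ℕ} (hn : 0 < n) :
    (n.totient : R) = ∑ x ∈ n.divisorsAntidiagonal, (μ x.1 : R) * x.2 :=
  ((ArithmeticFunction.sum_eq_iff_sum_mul_moebius_eq (f := fun n => (n.totient : R))
    (g := fun n => (n : R))).mp (fun m _ => by rw [← Nat.cast_sum, Nat.sum_totient]) n hn).symm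

lemma sum_Ioc_mul_totient_eq {R : Type*} [CommRing R] (χ : ℕ → R)
    (hχ : ∀ m n, χ (m * n) = χ m * χ n) (N : ℕ) :
    ∑ n ∈ Ioc 0 N, χ n * n.totient = ∑ n ∈ Ioc 0 N, μ n * χ n * ∑ m ∈ Ioc 0 (N / n), m * χ m := by
  let f : ArithmeticFunction R := ⟨fun n => μ n * χ n, by simp⟩
  let g : ArithmeticFunction R := ⟨fun n => n * χ n, by simp⟩
  have hfg : ∀ n ∈ Ioc 0 N, χ n * n.totient = (f * g) n := by
    intro n hn
    rw [totient_eq_sum_moebius_mul (mem_Ioc.mp hn).1, mul_sum, ArithmeticFunction.mul_apply]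
    refine sum_congr rfl fun x hx => ?_
    rw [← (Nat.mem_divisorsAntidiagonal.mp hx).1, hχ]
    change _ = (μ x.1 * χ x.1) * (x.2 * χ x.2)
    ring
  exact (sum_congr rfl hfg).trans (ArithmeticFunction.sum_Ioc_mul_eq_sum_sum f g N)

lemma sum_Ioc_inv_le_one_add_log (N : ℕ) : ∑ n ∈ Ioc 0 N, (n : ℝ)⁻¹ ≤ 1 + log N := by
  have := harmonic_le_one_add_log N
  rw [harmonic_eq_sum_Icc, ← zero_add 1, Icc_add_one_left_eq_Ioc] at this
  push_cast at this
  exact this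

lemma sum_range_succ_eq_sum_Ioc_of_map_zero {M : Type*} [AddCommMonoid M] {f : ℕ → M}
    (hf : f 0 = 0) (N : ℕ) :
    ∑ n ∈ range (N + 1), f n = ∑ n ∈ Ioc 0 N, f n := by
  rw [range_eq_Ico, Ico_add_one_right_eq_Icc, Icc_eq_cons_Ioc (Nat.zero_le N), sum_cons, hf,
    zero_add]

lemma abs_sum_Ioc_div_sq_sub_le {a : ℕ → ℝ} (ha : ∀ n, |a n| ≤ 1) {A : ℝ}
    (hA : HasSum (fun n : ℕ => a n / n ^ 2) A) {Q : ℕ} (hQ : 0 < Q) :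
    |∑ n ∈ Ioc 0 Q, a n / n ^ 2 - A| ≤ (Q : ℝ)⁻¹ := by
  have hS : Tendsto (fun N => ∑ n ∈ Ioc 0 N, a n / n ^ 2) atTop (𝓝 A) := by
    refine ((tendsto_add_atTop_iff_nat 1).mpr hA.tendsto_sum_nat).congr fun N => ?_
    exact sum_range_succ_eq_sum_Ioc_of_map_zero (by simp) N
  refine le_of_tendsto ((tendsto_const_nhds.sub hS).abs) ?_
  filter_upwards [eventually_ge_atTop Q] with N hN
  rw [← sum_Ioc_consecutive _ (Nat.zero_le Q) hN, sub_add_cancel_left, abs_neg]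
  calc |∑ n ∈ Ioc Q N, a n / n ^ 2| ≤ ∑ n ∈ Ioc Q N, ((n : ℝ) ^ 2)⁻¹ := by
        refine (abs_sum_le_sum_abs _ _).trans (sum_le_sum fun n _ => ?_)
        rw [abs_div, abs_of_nonneg (sq_nonneg (n : ℝ)), div_eq_mul_inv]
        exact mul_le_of_le_one_left (by positivity) (ha n)
    _ ≤ (Q : ℝ)⁻¹ - (N : ℝ)⁻¹ := sum_Ioc_inv_sq_le_sub hQ.ne' hN
    _ ≤ (Q : ℝ)⁻¹ := sub_le_self _ (by positivity)

section FloorEstimate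

variable {G : ℕ → ℝ} {β : ℝ}

lemma abs_apply_floor_sub_le (hβ0 : 0 ≤ β) (hβ1 : β ≤ 1)
    (hG : ∀ K : ℕ, |G K - β * K ^ 2| ≤ (K : ℝ)) {x : ℝ} (hx : 0 ≤ x) :
    |G ⌊x⌋₊ - β * x ^ 2| ≤ 3 * x := by
  have hfloor : (⌊x⌋₊ : ℝ) ≤ x := Nat.floor_le hx
  have hsq : |(⌊x⌋₊ : ℝ) ^ 2 - x ^ 2| ≤ 2 * x := by
    have := Nat.lt_floor_add_one x
    rw [abs_of_nonpos (by nlinarith)]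
    nlinarith
  calc |G ⌊x⌋₊ - β * x ^ 2|
      = |(G ⌊x⌋₊ - β * ⌊x⌋₊ ^ 2) + β * ((⌊x⌋₊ : ℝ) ^ 2 - x ^ 2)| := by ring_nf
    _ ≤ |G ⌊x⌋₊ - β * ⌊x⌋₊ ^ 2| + β * |(⌊x⌋₊ : ℝ) ^ 2 - x ^ 2| := by
        rw [← abs_of_nonneg hβ0, ← abs_mul, abs_of_nonneg hβ0]
        exact abs_add_le _ _
    _ ≤ x + 1 * (2 * x) := by gcongr; exact (hG _).trans hfloor
    _ = 3 * x := by ring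

/-- Each term is `β a(e) (Q/e)²` up to `3Q/e`, and the tail of `∑ a(e)/e²` beyond `Q` is at
most `1/Q`. -/
lemma abs_sum_mul_apply_div_sub_le {a : ℕ → ℝ} (ha : ∀ n, |a n| ≤ 1) (hβ0 : 0 ≤ β)
    (hβ1 : β ≤ 1) (hG : ∀ K : ℕ, |G K - β * K ^ 2| ≤ (K : ℝ)) {A : ℝ}
    (hA : HasSum (fun n : ℕ => a n / n ^ 2) A) {Q : ℕ} (hQ : 0 < Q) :
    |∑ e ∈ Ioc 0 Q, a e * G (Q / e) - β * A * Q ^ 2| ≤ 4 * Q * (1 + log Q) := by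
  have hQ' : (0 : ℝ) < Q := by exact_mod_cast hQ
  have hsplit : ∑ e ∈ Ioc 0 Q, a e * G (Q / e) - β * A * Q ^ 2 =
      ∑ e ∈ Ioc 0 Q, a e * (G (Q / e) - β * ((Q : ℝ) / e) ^ 2) +
        β * Q ^ 2 * (∑ e ∈ Ioc 0 Q, a e / e ^ 2 - A) := by
    have hterm : ∀ e ∈ Ioc 0 Q, a e * G (Q / e) =
        a e * (G (Q / e) - β * ((Q : ℝ) / e) ^ 2) + β * Q ^ 2 * (a e / e ^ 2) := by
      intro e he
      have : (e : ℝ) ≠ 0 := by exact_mod_cast (mem_Ioc.mp he).1.ne'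
      field_simp
      ring
    rw [sum_congr rfl hterm, sum_add_distrib, ← mul_sum]
    ring
  have hterms : ∀ e ∈ Ioc 0 Q, |a e * (G (Q / e) - β * ((Q : ℝ) / e) ^ 2)| ≤ 3 * Q * (e : ℝ)⁻¹ := by
    intro e _
    rw [abs_mul, mul_assoc, ← div_eq_mul_inv, ← Nat.floor_div_eq_div (K := ℝ)]
    exact (mul_le_mul (ha e) (abs_apply_floor_sub_le hβ0 hβ1 hG (by positivity)) (abs_nonneg _)
      zero_le_one).trans_eq (one_mul _)
  have htail := abs_sum_Ioc_div_sq_sub_le ha hA hQ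
  have hlog := sum_Ioc_inv_le_one_add_log Q
  have hlog0 : 0 ≤ log Q := log_natCast_nonneg Q
  rw [hsplit]
  calc _ ≤ ∑ e ∈ Ioc 0 Q, 3 * Q * (e : ℝ)⁻¹ + β * Q ^ 2 * (Q : ℝ)⁻¹ := by
        refine (abs_add_le _ _).trans (add_le_add ((abs_sum_le_sum_abs _ _).trans
          (sum_le_sum hterms)) ?_)
        rw [abs_mul, abs_of_nonneg (by positivity)]
        gcongr
    _ ≤ 3 * Q * (1 + log Q) + Q := by
        rw [← mul_sum, sq, ← mul_assoc, mul_inv_cancel_right₀ hQ'.ne']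
        linarith [mul_le_mul_of_nonneg_left hlog hQ'.le, mul_le_of_le_one_left hQ'.le hβ1]
    _ ≤ 4 * Q * (1 + log Q) := by nlinarith

end FloorEstimate

lemma one_le_two_mul_log {Q : ℕ} (hQ : 2 ≤ Q) : 1 ≤ 2 * log Q := by
  have : log 2 ≤ log Q := log_le_log two_pos (by exact_mod_cast hQ)
  linarith [log_two_gt_d9]

lemma isBigO_one_natCast_mul_log :
    (fun _ : ℕ => (1 : ℝ)) =O[atTop] fun Q : ℕ => (Q : ℝ) * log Q := by
  refine IsBigO.of_bound 2 ?_
  filter_upwards [eventually_ge_atTop 2] with Q hQ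
  have hlog := one_le_two_mul_log hQ
  have hQ' : (1 : ℝ) ≤ Q := by exact_mod_cast (by omega : 1 ≤ Q)
  rw [norm_one, norm_mul, Real.norm_natCast, Real.norm_of_nonneg (by linarith)]
  nlinarith

lemma isBigO_natCast_mul_one_add_log :
    (fun Q : ℕ => (Q : ℝ) * (1 + log Q)) =O[atTop] fun Q : ℕ => (Q : ℝ) * log Q := by
  refine IsBigO.of_bound 3 ?_
  filter_upwards [eventually_ge_atTop 2] with Q hQ
  have hlog := one_le_two_mul_log hQ
  rw [norm_mul, norm_mul, Real.norm_natCast, Real.norm_of_nonneg (by linarith),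
    Real.norm_of_nonneg (by linarith)]
  nlinarith [Nat.cast_nonneg (α := ℝ) Q]

theorem isBigO_sum_mul_totient (χ : ℕ → ℝ) (hχ : ∀ m n, χ (m * n) = χ m * χ n)
    (hχ_le : ∀ n, |χ n| ≤ 1) {β : ℝ} (hβ0 : 0 ≤ β) (hβ1 : β ≤ 1)
    (hG : ∀ K : ℕ, |∑ m ∈ Ioc 0 K, m * χ m - β * K ^ 2| ≤ (K : ℝ)) {A : ℝ}
    (hA : HasSum (fun n : ℕ => μ n * χ n / n ^ 2) A) :
    (fun Q : ℕ => ∑ n ∈ Ioc 0 Q, χ n * n.totient - β * A * Q ^ 2) =O[atTop]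
      fun Q : ℕ => (Q : ℝ) * log Q := by
  have ha : ∀ n, |(μ n : ℝ) * χ n| ≤ 1 := fun n => by
    rw [abs_mul]
    exact mul_le_one₀ (mod_cast ArithmeticFunction.abs_moebius_le_one) (abs_nonneg _) (hχ_le n)
  refine IsBigO.trans ?_ isBigO_natCast_mul_one_add_log
  refine IsBigO.of_bound 4 ?_
  filter_upwards [eventually_gt_atTop 0] with Q hQ
  rw [sum_Ioc_mul_totient_eq χ hχ, Real.norm_eq_abs, norm_mul, Real.norm_natCast,
    Real.norm_of_nonneg (by positivity), ← mul_assoc]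
  exact abs_sum_mul_apply_div_sub_le ha hβ0 hβ1 hG hA hQ

lemma hasSum_moebius_div_sq : HasSum (fun n : ℕ => (μ n : ℝ) / n ^ 2) (6 / π ^ 2) := by
  have hs : 1 < (2 : ℂ).re := by norm_num
  have hL : LSeries (fun n => μ n) 2 = 6 / π ^ 2 := by
    have := LSeries_one_mul_Lseries_moebius hs
    rw [LSeries_one_eq_riemannZeta hs, riemannZeta_two] at this
    have hπ : (π : ℂ) ≠ 0 := Complex.ofReal_ne_zero.mpr pi_ne_zero
    field_simp
    linear_combination 6 * this
  have h := (ArithmeticFunction.LSeriesSummable_moebius_iff.mpr hs).LSeriesHasSum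
  rw [hL, LSeriesHasSum] at h
  rw [← Complex.hasSum_ofReal]
  convert h using 1
  · ext n
    rcases eq_or_ne n 0 with rfl | hn
    · simp
    · rw [LSeries.term_of_ne_zero hn, show (2 : ℂ) = (2 : ℕ) by norm_num, Complex.cpow_natCast]
      push_cast
      rfl
  · push_cast
    rfl

def oddIndicator (n : ℕ) : ℝ := if Odd n then 1 else 0

lemma oddIndicator_mul (m n : ℕ) : oddIndicator (m * n) = oddIndicator m * oddIndicator n := by
  by_cases hm : Odd m <;> by_cases hn : Odd n <;> simp [oddIndicator, Nat.odd_mul, hm, hn]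

lemma abs_oddIndicator_le_one (n : ℕ) : |oddIndicator n| ≤ 1 := by
  unfold oddIndicator
  split_ifs <;> simp

lemma moebius_two_mul (m : ℕ) : μ (2 * m) = if Odd m then -μ m else 0 := by
  split_ifs with hm
  · rw [ArithmeticFunction.isMultiplicative_moebius.map_mul_of_coprime
      (Nat.coprime_two_left.mpr hm), ArithmeticFunction.moebius_apply_prime Nat.prime_two,
      neg_one_mul]
  · obtain ⟨k, rfl⟩ := Nat.not_odd_iff_even.mp hm
    refine ArithmeticFunction.moebius_eq_zero_of_not_squarefree fun h => ?_
    exact absurd (Nat.isUnit_iff.mp (h 2 ⟨k, by ring⟩)) (by norm_num)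

/-- Since `μ(2m) = -μ(m)` for odd `m` and `0` otherwise, the even-indexed part of
`∑ μ(n)/n² = 6/π²` is `-1/4` of the odd-indexed part. -/
lemma hasSum_moebius_mul_oddIndicator_div_sq :
    HasSum (fun n : ℕ => μ n * oddIndicator n / n ^ 2) (8 / π ^ 2) := by
  set f : ℕ → ℝ := fun n => μ n * oddIndicator n / n ^ 2
  obtain ⟨S, hfS⟩ : Summable f := by
    refine Summable.of_norm_bounded (Real.summable_one_div_nat_pow.mpr one_lt_two) fun n => ?_
    rw [Real.norm_eq_abs, abs_div, abs_of_nonneg (sq_nonneg (n : ℝ)), abs_mul]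
    gcongr
    exact mul_le_one₀ (mod_cast ArithmeticFunction.abs_moebius_le_one) (abs_nonneg _)
      (abs_oddIndicator_le_one n)
  have hodd : HasSum (fun k => f (2 * k + 1)) S := by
    refine (Function.Injective.hasSum_iff (fun a b h => by simpa using h) fun n hn => ?_).mpr hfS
    have : ¬ Odd n := fun ⟨k, hk⟩ => hn ⟨k, hk.symm⟩
    simp [f, oddIndicator, this]
  have heven : HasSum (fun k => (μ (2 * k) : ℝ) / ((2 * k : ℕ) : ℝ) ^ 2) (-(1 / 4) * S) := by
    refine (hfS.mul_left _).congr_fun fun k => ?_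
    simp only [f, moebius_two_mul, oddIndicator]
    split_ifs <;> push_cast <;> ring
  have hsum : HasSum (fun n : ℕ => (μ n : ℝ) / n ^ 2) (-(1 / 4) * S + S) :=
    heven.even_add_odd (f := fun n : ℕ => (μ n : ℝ) / n ^ 2)
      (hodd.congr_fun fun k => by simp [f, oddIndicator])
  have hS : S = 8 / π ^ 2 := by
    linear_combination (4 / 3) * hsum.unique hasSum_moebius_div_sq
  exact hS ▸ hfS

lemma abs_sum_Ioc_natCast_sub_le (K : ℕ) : |∑ m ∈ Ioc 0 K, (m : ℝ) - 1 / 2 * K ^ 2| ≤ (K : ℝ) := by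
  have hsum : ∑ m ∈ Ioc 0 K, (m : ℝ) = K * (K + 1) / 2 := by
    induction K with
    | zero => simp
    | succ K ih =>
      rw [sum_Ioc_succ_top (Nat.zero_le K), ih]
      push_cast
      ring
  rw [hsum, abs_le]
  constructor <;> nlinarith [Nat.cast_nonneg (α := ℝ) K]

lemma sum_Ioc_two_mul_mul_oddIndicator (j : ℕ) :
    ∑ m ∈ Ioc 0 (2 * j), m * oddIndicator m = (j : ℝ) ^ 2 := by
  induction j with
  | zero => simp
  | succ j ih =>
    rw [show 2 * (j + 1) = 2 * j + 1 + 1 by ring, sum_Ioc_succ_top (by omega),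
      sum_Ioc_succ_top (by omega), ih]
    simp only [oddIndicator, odd_two_mul_add_one, if_true,
      show ¬ Odd (2 * j + 1 + 1) by rw [Nat.not_odd_iff_even]; exact ⟨j + 1, by ring⟩]
    push_cast
    ring

lemma abs_sum_Ioc_mul_oddIndicator_sub_le (K : ℕ) :
    |∑ m ∈ Ioc 0 K, m * oddIndicator m - 1 / 4 * K ^ 2| ≤ (K : ℝ) := by
  obtain ⟨j, rfl | rfl⟩ := Nat.even_or_odd' K
  · rw [sum_Ioc_two_mul_mul_oddIndicator, show (j : ℝ) ^ 2 - 1 / 4 * ((2 * j : ℕ) : ℝ) ^ 2 = 0 by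
      push_cast; ring, abs_zero]
    positivity
  · rw [sum_Ioc_succ_top (by omega), sum_Ioc_two_mul_mul_oddIndicator]
    simp only [oddIndicator, odd_two_mul_add_one, if_true]
    rw [abs_le]
    push_cast
    constructor <;> nlinarith [Nat.cast_nonneg (α := ℝ) j]

theorem isBigO_sum_totient :
    (fun Q : ℕ => ∑ n ∈ Ioc 0 Q, (n.totient : ℝ) - 3 / π ^ 2 * Q ^ 2) =O[atTop]
      fun Q : ℕ => (Q : ℝ) * log Q := by
  have h := isBigO_sum_mul_totient (fun _ => 1) (fun _ _ => (one_mul 1).symm) (fun _ => by simp)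
    (β := 1 / 2) (by norm_num) (by norm_num) (by simpa using abs_sum_Ioc_natCast_sub_le)
    (by simpa using hasSum_moebius_div_sq)
  convert h using 3
  · simp only [one_mul]
  · ring

theorem isBigO_sum_oddIndicator_mul_totient :
    (fun Q : ℕ => ∑ n ∈ Ioc 0 Q, oddIndicator n * n.totient - 2 / π ^ 2 * Q ^ 2) =O[atTop]
      fun Q : ℕ => (Q : ℝ) * log Q := by
  have h := isBigO_sum_mul_totient oddIndicator oddIndicator_mul abs_oddIndicator_le_one
    (β := 1 / 4) (by norm_num) (by norm_num) abs_sum_Ioc_mul_oddIndicator_sub_le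
    hasSum_moebius_mul_oddIndicator_div_sq
  convert h using 3
  ring

lemma sum_filter_odd_totient (Q : ℕ) :
    ((∑ d ∈ Ioc 0 Q with Odd d, d.totient : ℕ) : ℝ) =
      ∑ n ∈ Ioc 0 Q, oddIndicator n * n.totient := by
  rw [Nat.cast_sum, sum_filter]
  refine sum_congr rfl fun n _ => ?_
  unfold oddIndicator
  split_ifs <;> simp

lemma card_filter_odd_den_fareyFinset {Q : ℕ} (hQ : 0 < Q) :
    (#{x ∈ fareyFinset Q | Odd x.den} : ℝ) = 1 + ∑ n ∈ Ioc 0 Q, oddIndicator n * n.totient := by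
  rw [card_filter_fareyFinset _ hQ, if_pos odd_one, Nat.cast_add, Nat.cast_one,
    sum_filter_odd_totient]

lemma card_filter_even_den_fareyFinset {Q : ℕ} (hQ : 0 < Q) :
    (#{x ∈ fareyFinset Q | Even x.den} : ℝ) =
      ∑ n ∈ Ioc 0 Q, (n.totient : ℝ) - ∑ n ∈ Ioc 0 Q, oddIndicator n * n.totient := by
  rw [card_filter_fareyFinset _ hQ, if_neg (by decide), zero_add, ← sum_filter_odd_totient,
    eq_sub_iff_add_eq, ← Nat.cast_add, ← Nat.cast_sum]
  simp only [← Nat.not_odd_iff_even]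
  rw [sum_filter_not_add_sum_filter]

/-- As `Q → ∞`, the number of Farey fractions of order `Q` with odd
denominator equals `(2/π²)Q² + O(Q log Q)`, and the number with even denominator equals
`(1/π²)Q² + O(Q log Q)`. -/
theorem card_farey_odd_even_asymptotic :
    ((fun Q : ℕ => ((((fareyFinset Q).filter fun x => Odd x.den).card : ℝ) -
        2 / π ^ 2 * (Q : ℝ) ^ 2))
      =O[atTop] fun Q : ℕ => (Q : ℝ) * Real.log Q) ∧
    ((fun Q : ℕ => ((((fareyFinset Q).filter fun x => Even x.den).card : ℝ) -
        1 / π ^ 2 * (Q : ℝ) ^ 2))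
      =O[atTop] fun Q : ℕ => (Q : ℝ) * Real.log Q) := by
  constructor
  · refine (isBigO_one_natCast_mul_log.add isBigO_sum_oddIndicator_mul_totient).congr' ?_ .rfl
    filter_upwards [eventually_gt_atTop 0] with Q hQ
    rw [card_filter_odd_den_fareyFinset hQ]
    ring
  · refine (isBigO_sum_totient.sub isBigO_sum_oddIndicator_mul_totient).congr' ?_ .rfl
    filter_upwards [eventually_gt_atTop 0] with Q hQ
    rw [card_filter_even_den_fareyFinset hQ]
    ring
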